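/- arXiv:2102.02756 — 3 statements merged into one kernel-verified Lean document; each statement's English description precedes it below -/
import Mathlib

section
/- Under the initialization condition, the population coefficient update M_U(S) satisfies ‖M_U(S) M_U(S)ᵀ − D_S*‖ ≤ (1 − η σ_r) ‖S Sᵀ − D_S*‖ + 3η ‖S Tᵀ‖². -/
open Matrix
open scoped Matrix.Norms.L2Operator

/-!
With `E = S Sᵀ - D`, `P = S Tᵀ` and `G = E S + P T`, the update is `M = S - η G`, and for every
scalar `b`
  `M Mᵀ - D = (1 - 2ηb) E + η (B E + E B) - 2η P Pᵀ + η² G Gᵀ`,  where `B = b I - S Sᵀ`.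
Taking `b = σ₁`, the diagonal matrix `σ₁ I - D` has entries in `[0, σ₁ - σ_r]`, so
`‖B‖ ≤ σ₁ - σ_r + ‖E‖` and the first two terms contribute at most `(1 - 2ησ_r)‖E‖ + 2η‖E‖²`.
The surplus `2η‖E‖²` (plus the `η²` term's share) is paid for by half of the contraction because
`‖E‖ ≤ σ_r/10`, and the rest of the `η²` term is small because `η‖S‖²` and `η‖T‖²` are `O(1/100)`.
-/

namespace Matrix

variable {m n p : Type*} [Fintype m] [Fintype n] [Fintype p] [DecidableEq m]

section Identity

variable {R : Type*} [CommRing R] {S : Matrix m n R} {T : Matrix p n R} {D E : Matrix m m R}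
  {P : Matrix m p R} {G : Matrix m n R}

lemma step_mul_transpose_sub_eq (hD : Dᵀ = D) (hE : E = S * Sᵀ - D) (hP : P = S * Tᵀ)
    (hG : G = E * S + P * T) (η b : R) :
    (S - η • G) * (S - η • G)ᵀ - D
      = (1 - 2 * η * b) • E + η • ((b • 1 - S * Sᵀ) * E + E * (b • 1 - S * Sᵀ))
        - (2 * η) • (P * Pᵀ) + η ^ 2 • (G * Gᵀ) := by
  have hEt : Eᵀ = E := by rw [hE, transpose_sub, transpose_mul, transpose_transpose, hD]
  have hSG : S * Gᵀ = S * Sᵀ * E + P * Pᵀ := by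
    simp only [hG, hP, transpose_add, transpose_mul, hEt, transpose_transpose, Matrix.mul_add,
      Matrix.mul_assoc]
  have hGS : G * Sᵀ = E * (S * Sᵀ) + P * Pᵀ := by
    simp only [hG, hP, Matrix.add_mul, transpose_mul, transpose_transpose, Matrix.mul_assoc]
  have hSS : S * Sᵀ = D + E := by rw [hE]; abel
  rw [transpose_sub, transpose_smul]
  simp only [Matrix.sub_mul, Matrix.mul_sub, Matrix.smul_mul, Matrix.mul_smul, hSG, hGS,
    Matrix.one_mul, Matrix.mul_one]
  rw [hSS]
  module

end Identity

variable [DecidableEq n] [DecidableEq p]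

lemma l2_opNorm_mul_transpose_self (A : Matrix m n ℝ) : ‖A * Aᵀ‖ = ‖A‖ * ‖A‖ := by
  rw [← conjTranspose_eq_transpose_of_trivial]
  simpa only [conjTranspose_conjTranspose, l2_opNorm_conjTranspose] using
    l2_opNorm_conjTranspose_mul_self Aᴴ

lemma IsDiag.l2_opNorm_le {𝕜 : Type*} [RCLike 𝕜] {D : Matrix m m 𝕜} (hD : D.IsDiag) {c : ℝ}
    (hc : 0 ≤ c) (h : ∀ i, ‖D i i‖ ≤ c) : ‖D‖ ≤ c := by
  rw [← hD.diagonal_diag, l2_opNorm_diagonal]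
  exact (pi_norm_le_iff_of_nonneg hc).2 h

lemma l2_opNorm_step_mul_transpose_sub_le {S : Matrix m n ℝ} {T : Matrix p n ℝ}
    {D E : Matrix m m ℝ} {P : Matrix m p ℝ} {G : Matrix m n ℝ} (hD : Dᵀ = D) (hE : E = S * Sᵀ - D)
    (hP : P = S * Tᵀ) (hG : G = E * S + P * T) {η b : ℝ} (hη : 0 ≤ η) (hηb : 2 * η * b ≤ 1) :
    ‖(S - η • G) * (S - η • G)ᵀ - D‖
      ≤ (1 - 2 * η * b) * ‖E‖ + 2 * η * ‖b • 1 - S * Sᵀ‖ * ‖E‖ + 2 * η * ‖P‖ ^ 2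
        + η ^ 2 * (‖E‖ * ‖S‖ + ‖P‖ * ‖T‖) ^ 2 := by
  set B := b • 1 - S * Sᵀ
  have hBE : ‖B * E + E * B‖ ≤ 2 * ‖B‖ * ‖E‖ := by
    linarith [norm_add_le (B * E) (E * B), l2_opNorm_mul B E, l2_opNorm_mul E B]
  have hGnorm : ‖G‖ ≤ ‖E‖ * ‖S‖ + ‖P‖ * ‖T‖ := by
    rw [hG]
    exact (norm_add_le _ _).trans (add_le_add (l2_opNorm_mul E S) (l2_opNorm_mul P T))
  rw [step_mul_transpose_sub_eq hD hE hP hG η b]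
  refine (norm_add_le _ _).trans (add_le_add ((norm_sub_le _ _).trans (add_le_add
    ((norm_add_le _ _).trans (add_le_add ?_ ?_)) ?_)) ?_)
  · rw [norm_smul, Real.norm_of_nonneg (by linarith)]
  · rw [norm_smul, Real.norm_of_nonneg hη]
    linarith [mul_le_mul_of_nonneg_left hBE hη]
  · rw [norm_smul, Real.norm_of_nonneg (by linarith), l2_opNorm_mul_transpose_self, sq]
  · rw [norm_smul, Real.norm_of_nonneg (by positivity), l2_opNorm_mul_transpose_self, ← sq]
    gcongr

end Matrix

lemma scalar_contraction_bound {η σ b β e p s t : ℝ} (hη : 0 ≤ η) (he : 0 ≤ e) (heσ : e ≤ σ / 4)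
    (hβ : β ≤ b - σ + e) (hs : η * s ^ 2 ≤ 1) (ht : η * t ^ 2 ≤ 1 / 2) :
    (1 - 2 * η * b) * e + 2 * η * β * e + 2 * η * p ^ 2 + η ^ 2 * (e * s + p * t) ^ 2
      ≤ (1 - η * σ) * e + 3 * η * p ^ 2 := by
  have hcross : η ^ 2 * (e * s + p * t) ^ 2 ≤ 2 * η * e ^ 2 + η * p ^ 2 :=
    calc η ^ 2 * (e * s + p * t) ^ 2 ≤ η ^ 2 * (2 * (e ^ 2 * s ^ 2) + 2 * (p ^ 2 * t ^ 2)) := by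
          gcongr; nlinarith [sq_nonneg (e * s - p * t)]
      _ = 2 * η * e ^ 2 * (η * s ^ 2) + 2 * η * p ^ 2 * (η * t ^ 2) := by ring
      _ ≤ 2 * η * e ^ 2 * 1 + 2 * η * p ^ 2 * (1 / 2) := by gcongr
      _ = 2 * η * e ^ 2 + η * p ^ 2 := by ring
  have hshift : 2 * η * β * e ≤ 2 * η * (b - σ + e) * e := by gcongr
  have hsmall : η * e * e ≤ η * (σ / 4) * e := by gcongr
  linarith

theorem stmt_3_general
    (d k r : ℕ) (hr : 0 < r)
    (σr σ1 : ℝ) (hσr : 0 < σr)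
    (DS : Matrix (Fin r) (Fin r) ℝ) (hDS : DS.IsDiag)
    (hDSlb : ∀ i, σr ≤ DS i i) (hDSub : ∀ i, DS i i ≤ σ1)
    (η : ℝ) (hη : η = 1 / (100 * σ1))
    (S : Matrix (Fin r) (Fin k) ℝ)
    (T : Matrix (Fin (d - r)) (Fin k) ℝ)
    (MU : Matrix (Fin r) (Fin k) ℝ)
    (hMU : MU = S - η • (S * Sᵀ * S + S * Tᵀ * T - DS * S))
    (hinit1 : ‖S * Sᵀ - DS‖ ≤ 0.1 * σr) (hinit2 : ‖T * Tᵀ‖ ≤ 0.1 * σr) :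
    ‖MU * MUᵀ - DS‖ ≤ (1 - η * σr) * ‖S * Sᵀ - DS‖ + 3 * η * ‖S * Tᵀ‖ ^ 2 := by
  have hσ : σr ≤ σ1 := (hDSlb ⟨0, hr⟩).trans (hDSub ⟨0, hr⟩)
  have hσ1 : 0 < σ1 := hσr.trans_le hσ
  have hησ1 : η * σ1 = 1 / 100 := by rw [hη]; field_simp
  have hη0 : 0 ≤ η := by rw [hη]; positivity
  have hDSnorm : ‖DS‖ ≤ σ1 :=
    hDS.l2_opNorm_le (by linarith) fun i ↦ by
      rw [Real.norm_eq_abs, abs_le]; constructor <;> linarith [hDSlb i, hDSub i]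
  have hshift : ‖σ1 • 1 - S * Sᵀ‖ ≤ σ1 - σr + ‖S * Sᵀ - DS‖ := by
    have hdiag : (σ1 • 1 - DS).IsDiag := (isDiag_smul_one _ σ1).sub hDS
    have hnorm := hdiag.l2_opNorm_le (c := σ1 - σr) (by linarith) fun i ↦ by
      simp only [Matrix.sub_apply, Matrix.smul_apply, one_apply_eq, smul_eq_mul, mul_one,
        Real.norm_eq_abs]
      rw [abs_le]; constructor <;> linarith [hDSlb i, hDSub i]
    calc ‖σ1 • 1 - S * Sᵀ‖ = ‖(σ1 • 1 - DS) - (S * Sᵀ - DS)‖ := by congr 1; abel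
      _ ≤ σ1 - σr + ‖S * Sᵀ - DS‖ := (norm_sub_le _ _).trans (by linarith)
  have hS : η * ‖S‖ ^ 2 ≤ 1 := by
    have : ‖S‖ ^ 2 ≤ ‖DS‖ + ‖S * Sᵀ - DS‖ := by
      rw [sq, ← l2_opNorm_mul_transpose_self]
      simpa using norm_add_le DS (S * Sᵀ - DS)
    nlinarith
  have hT : η * ‖T‖ ^ 2 ≤ 1 / 2 := by
    rw [sq, ← l2_opNorm_mul_transpose_self]
    nlinarith
  rw [hMU, show S * Sᵀ * S + S * Tᵀ * T - DS * S = (S * Sᵀ - DS) * S + S * Tᵀ * T by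
    rw [Matrix.sub_mul]; abel]
  refine (l2_opNorm_step_mul_transpose_sub_le hDS.isSymm rfl rfl rfl hη0 (b := σ1)
    (by linarith)).trans ?_
  exact scalar_contraction_bound hη0 (norm_nonneg _) (by linarith) hshift hS hT

theorem stmt_3
    (d k r : ℕ) (hd : 0 < d) (hr : 0 < r) (hrk : r ≤ k) (hkd : k ≤ d)
    (U : Matrix (Fin d) (Fin r) ℝ) (V : Matrix (Fin d) (Fin (d - r)) ℝ)
    (hU : Uᵀ * U = 1) (hV : Vᵀ * V = 1) (hUV : Uᵀ * V = 0)
    (hUVc : U * Uᵀ + V * Vᵀ = 1)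
    (σr σ1 : ℝ) (hσr : 0 < σr)
    (DS : Matrix (Fin r) (Fin r) ℝ) (hDS : DS.IsDiag)
    (hDSlb : ∀ i, σr ≤ DS i i) (hDSub : ∀ i, DS i i ≤ σ1)
    (DT : Matrix (Fin (d - r)) (Fin (d - r)) ℝ) (hDT : DT.IsDiag)
    (hDTnn : ∀ i, 0 ≤ DT i i)
    (η : ℝ) (hη : η = 1 / (100 * σ1))
    (F : Matrix (Fin d) (Fin k) ℝ)
    (S : Matrix (Fin r) (Fin k) ℝ) (hS : S = Uᵀ * F)
    (T : Matrix (Fin (d - r)) (Fin k) ℝ) (hT : T = Vᵀ * F)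
    (MU : Matrix (Fin r) (Fin k) ℝ)
    (hMU : MU = S - η • (S * Sᵀ * S + S * Tᵀ * T - DS * S))
    (MV : Matrix (Fin (d - r)) (Fin k) ℝ)
    (hMV : MV = T - η • (T * Tᵀ * T + T * Sᵀ * S - DT * T))
    (hinit1 : ‖S * Sᵀ - DS‖ ≤ 0.1 * σr) (hinit2 : ‖T * Tᵀ‖ ≤ 0.1 * σr)
    (hinit3 : ‖S * Tᵀ‖ ≤ 0.1 * σr) (hinitDT : ‖DT‖ ≤ 0.001 * σr) :
    ‖MU * MUᵀ - DS‖ ≤ (1 - η * σr) * ‖S * Sᵀ - DS‖ + 3 * η * ‖S * Tᵀ‖ ^ 2 :=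
  stmt_3_general d k r hr σr σ1 hσr DS hDS hDSlb hDSub η hη S T MU hMU hinit1 hinit2
end

section
/- Under the initialization condition, the non-expansion bound ‖S M_V(T)ᵀ‖ ≤ ‖S Tᵀ‖ holds. -/
open Matrix
open scoped Matrix.Norms.L2Operator

/-!
Expanding the update, `S M_V(T)ᵀ = (I - η S Sᵀ)(S Tᵀ) - η (S Tᵀ)(T Tᵀ) + η (S Tᵀ) D_Tᵀ`.
Since `S Sᵀ` is within `0.1 σ_r` of the diagonal `D_S ≥ σ_r`, the first factor has norm at most
`1 - 0.9 η σ_r`, while the other two terms cost at most `0.101 η σ_r ‖S Tᵀ‖`; the net factor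
`1 - 0.799 η σ_r` is below one.
-/

namespace Matrix

variable {m n l : Type*} [Fintype m] [Fintype n] [Fintype l]

lemma l2_opNorm_transpose_real [DecidableEq m] [DecidableEq n] (A : Matrix m n ℝ) :
    ‖Aᵀ‖ = ‖A‖ := by
  rw [← conjTranspose_eq_transpose_of_trivial, l2_opNorm_conjTranspose]

lemma l2_opNorm_one_sub_smul_le_of_isDiag [DecidableEq n] [Nonempty n] {D : Matrix n n ℝ}
    (hD : D.IsDiag) {η a : ℝ} (hη : 0 ≤ η) (ha : ∀ i, a ≤ D i i) (hηD : ∀ i, η * D i i ≤ 1) :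
    ‖1 - η • D‖ ≤ 1 - η * a := by
  have hdiag : (1 - η • D).IsDiag := isDiag_one.sub (hD.smul η)
  have hentry : ∀ i, |1 - η * D i i| ≤ 1 - η * a := fun i => by
    have := mul_le_mul_of_nonneg_left (ha i) hη
    rw [abs_le]
    constructor <;> linarith [hηD i]
  rw [← hdiag.diagonal_diag, l2_opNorm_diagonal]
  refine (pi_norm_le_iff_of_nonneg ((abs_nonneg _).trans (hentry (Classical.arbitrary n)))).mpr
    fun i => ?_
  simpa [Real.norm_eq_abs] using hentry i

lemma l2_opNorm_one_sub_smul_le [DecidableEq n] [Nonempty n] {P D : Matrix n n ℝ} (hD : D.IsDiag)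
    {η a ε : ℝ} (hη : 0 ≤ η) (ha : ∀ i, a ≤ D i i) (hηD : ∀ i, η * D i i ≤ 1)
    (hPD : ‖P - D‖ ≤ ε) :
    ‖1 - η • P‖ ≤ 1 - η * a + η * ε :=
  calc ‖1 - η • P‖ = ‖(1 - η • D) - η • (P - D)‖ := by rw [smul_sub, sub_sub_sub_cancel_right]
    _ ≤ ‖1 - η • D‖ + η * ‖P - D‖ := by
      grw [norm_sub_le, norm_smul, Real.norm_of_nonneg hη]
    _ ≤ 1 - η * a + η * ε := by
      grw [l2_opNorm_one_sub_smul_le_of_isDiag hD hη ha hηD, hPD]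

lemma mul_transpose_gradStep_eq [DecidableEq m] (S : Matrix m l ℝ) (T : Matrix n l ℝ)
    (D : Matrix n n ℝ) (η : ℝ) :
    S * (T - η • (T * Tᵀ * T + T * Sᵀ * S - D * T))ᵀ
      = (1 - η • (S * Sᵀ)) * (S * Tᵀ) - η • (S * Tᵀ * (T * Tᵀ)) + η • (S * Tᵀ * Dᵀ) := by
  simp only [transpose_sub, transpose_smul, transpose_add, transpose_mul, transpose_transpose,
    Matrix.mul_sub, Matrix.mul_add, Matrix.mul_smul, Matrix.sub_mul, Matrix.smul_mul,
    Matrix.one_mul, Matrix.mul_assoc, smul_add, smul_sub]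
  abel

lemma l2_opNorm_gradStep_le [DecidableEq m] [DecidableEq n] {P : Matrix m m ℝ}
    {A : Matrix m n ℝ} {Q E : Matrix n n ℝ} {η c q e : ℝ} (hη : 0 ≤ η)
    (hP : ‖1 - η • P‖ ≤ c) (hQ : ‖Q‖ ≤ q) (hE : ‖E‖ ≤ e) :
    ‖(1 - η • P) * A - η • (A * Q) + η • (A * Eᵀ)‖ ≤ (c + η * q + η * e) * ‖A‖ := by
  calc _ ≤ ‖(1 - η • P) * A‖ + η * ‖A * Q‖ + η * ‖A * Eᵀ‖ := by
        grw [norm_add_le, norm_sub_le, norm_smul, norm_smul, Real.norm_of_nonneg hη]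
    _ ≤ c * ‖A‖ + η * (‖A‖ * q) + η * (‖A‖ * e) := by
        grw [l2_opNorm_mul, l2_opNorm_mul, l2_opNorm_mul, l2_opNorm_transpose_real, hP, hQ, hE]
    _ = (c + η * q + η * e) * ‖A‖ := by ring

end Matrix

theorem stmt_8_general
    (d k r : ℕ) (hr : 0 < r)
    (σr σ1 : ℝ) (hσr : 0 < σr)
    (DS : Matrix (Fin r) (Fin r) ℝ) (hDS : DS.IsDiag)
    (hDSlb : ∀ i, σr ≤ DS i i) (hDSub : ∀ i, DS i i ≤ σ1)
    (DT : Matrix (Fin (d - r)) (Fin (d - r)) ℝ)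
    (η : ℝ) (hη : η = 1 / (100 * σ1))
    (S : Matrix (Fin r) (Fin k) ℝ)
    (T : Matrix (Fin (d - r)) (Fin k) ℝ)
    (MV : Matrix (Fin (d - r)) (Fin k) ℝ)
    (hMV : MV = T - η • (T * Tᵀ * T + T * Sᵀ * S - DT * T))
    (hinit1 : ‖S * Sᵀ - DS‖ ≤ 0.1 * σr) (hinit2 : ‖T * Tᵀ‖ ≤ 0.1 * σr)
    (hinitDT : ‖DT‖ ≤ 0.001 * σr) :
    ‖S * MVᵀ‖ ≤ ‖S * Tᵀ‖ := by
  have : Nonempty (Fin r) := ⟨⟨0, hr⟩⟩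
  have hσ1 : 0 < σ1 := hσr.trans_le ((hDSlb ⟨0, hr⟩).trans (hDSub ⟨0, hr⟩))
  have hηpos : 0 < η := by rw [hη]; positivity
  have hηDS : ∀ i, η * DS i i ≤ 1 := fun i => by
    have : η * σ1 = 1 / 100 := by rw [hη]; field_simp
    nlinarith [hDSub i]
  rw [hMV, Matrix.mul_transpose_gradStep_eq]
  refine (l2_opNorm_gradStep_le hηpos.le
    (l2_opNorm_one_sub_smul_le hDS hηpos.le hDSlb hηDS hinit1) hinit2 hinitDT).trans ?_
  refine mul_le_of_le_one_left (norm_nonneg _) ?_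
  nlinarith [mul_pos hηpos hσr]

theorem stmt_8
    (d k r : ℕ) (hd : 0 < d) (hr : 0 < r) (hrk : r ≤ k) (hkd : k ≤ d)
    (U : Matrix (Fin d) (Fin r) ℝ) (V : Matrix (Fin d) (Fin (d - r)) ℝ)
    (hU : Uᵀ * U = 1) (hV : Vᵀ * V = 1) (hUV : Uᵀ * V = 0)
    (hUVc : U * Uᵀ + V * Vᵀ = 1)
    (σr σ1 : ℝ) (hσr : 0 < σr)
    (DS : Matrix (Fin r) (Fin r) ℝ) (hDS : DS.IsDiag)
    (hDSlb : ∀ i, σr ≤ DS i i) (hDSub : ∀ i, DS i i ≤ σ1)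
    (DT : Matrix (Fin (d - r)) (Fin (d - r)) ℝ) (hDT : DT.IsDiag)
    (hDTnn : ∀ i, 0 ≤ DT i i)
    (η : ℝ) (hη : η = 1 / (100 * σ1))
    (F : Matrix (Fin d) (Fin k) ℝ)
    (S : Matrix (Fin r) (Fin k) ℝ) (hS : S = Uᵀ * F)
    (T : Matrix (Fin (d - r)) (Fin k) ℝ) (hT : T = Vᵀ * F)
    (MU : Matrix (Fin r) (Fin k) ℝ)
    (hMU : MU = S - η • (S * Sᵀ * S + S * Tᵀ * T - DS * S))
    (MV : Matrix (Fin (d - r)) (Fin k) ℝ)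
    (hMV : MV = T - η • (T * Tᵀ * T + T * Sᵀ * S - DT * T))
    (hinit1 : ‖S * Sᵀ - DS‖ ≤ 0.1 * σr) (hinit2 : ‖T * Tᵀ‖ ≤ 0.1 * σr)
    (hinit3 : ‖S * Tᵀ‖ ≤ 0.1 * σr) (hinitDT : ‖DT‖ ≤ 0.001 * σr) :
    ‖S * MVᵀ‖ ≤ ‖S * Tᵀ‖ :=
  stmt_8_general d k r hr σr σ1 hσr DS hDS hDSlb hDSub DT η hη S T MV hMV hinit1 hinit2 hinitDT
end

section
/- In the one-step sample setting, write ε = √(d log d / n)·σ. If the gradient-noise matrix satisfies ‖Δ‖ ≤ η σ_r D + 4ε, then ‖T⁺ (T⁺)ᵀ‖ ≤ (1 − 0.9 η D)·D + (0.16 ε + 19 D)·η ε. -/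
/-!
Projecting the sample update onto the complement of `U` gives
`T⁺ = T (1 - η FᵀF) + η (D_T T - Vᵀ Δ F)`. The first term contracts: with `W = 1 - η FᵀF`,
`‖W y‖² ≤ ‖y‖² - 1.9 η ‖F y‖² ≤ ‖y‖² - 1.9 η ‖T y‖²` because `η ‖F‖² ≤ 0.1`, and Cauchy–Schwarz
turns this into `‖T W (T W)ᵀ‖ ≤ D - 1.9 η D²`. Every other term of `T⁺ (T⁺)ᵀ` carries a factor
`‖D_T‖ ≤ ε` or `‖Δ‖`, and is controlled by `‖T Fᵀ‖ ≤ 2D` and `‖F‖² ≤ σ₁ + 2D`, both consequences of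
the splitting `F = U S + V T`. The sample size makes `ε ≤ 0.0015 σ_r`, and what remains is a
polynomial inequality in `ηD ≤ 0.001`, `ηε` and `η‖Δ‖ ≤ ηD/100 + 4ηε`.
-/

open Matrix
open scoped Matrix.Norms.L2Operator

section DotProduct

variable {m n : Type*} [Fintype m] [Fintype n]

theorem Matrix.dotProduct_self_nonneg (x : n → ℝ) : 0 ≤ x ⬝ᵥ x :=
  Finset.sum_nonneg fun i _ => mul_self_nonneg (x i)

theorem Matrix.sq_dotProduct_le (x y : n → ℝ) : (x ⬝ᵥ y) ^ 2 ≤ (x ⬝ᵥ x) * (y ⬝ᵥ y) := by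
  simpa only [dotProduct, sq] using Finset.sum_mul_sq_le_sq_mul_sq Finset.univ x y

theorem Matrix.dotProduct_mulVec_eq_transpose (A : Matrix m n ℝ) (x : m → ℝ)
    (y : n → ℝ) : x ⬝ᵥ A *ᵥ y = Aᵀ *ᵥ x ⬝ᵥ y := by
  rw [dotProduct_mulVec, mulVec_transpose]

theorem EuclideanSpace.norm_toLp_sq (x : n → ℝ) : ‖WithLp.toLp 2 x‖ ^ 2 = x ⬝ᵥ x := by
  rw [EuclideanSpace.real_norm_sq_eq]
  simp [dotProduct, sq]

end DotProduct

section L2OpNorm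

variable {l m n : Type*} [Fintype l] [Fintype m] [Fintype n]

theorem Matrix.mulVec_dotProduct_mulVec_le [DecidableEq n] (A : Matrix m n ℝ) (x : n → ℝ) :
    A *ᵥ x ⬝ᵥ A *ᵥ x ≤ ‖A‖ ^ 2 * (x ⬝ᵥ x) := by
  rw [← EuclideanSpace.norm_toLp_sq, ← EuclideanSpace.norm_toLp_sq, ← mul_pow]
  exact pow_le_pow_left₀ (norm_nonneg _) (l2_opNorm_mulVec A (WithLp.toLp 2 x)) 2

theorem Matrix.l2_opNorm_le_of_mulVec_dotProduct_mulVec_le [DecidableEq n]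
    (A : Matrix m n ℝ) {β : ℝ} (hβ : 0 ≤ β) (h : ∀ x, A *ᵥ x ⬝ᵥ A *ᵥ x ≤ β ^ 2 * (x ⬝ᵥ x)) :
    ‖A‖ ≤ β := by
  rw [l2_opNorm_def]
  refine ContinuousLinearMap.opNorm_le_bound _ hβ fun x => ?_
  refine (sq_le_sq₀ (norm_nonneg _) (by positivity)).mp ?_
  rw [mul_pow]
  exact (EuclideanSpace.norm_toLp_sq (A *ᵥ x.ofLp)).trans_le
    ((h x.ofLp).trans_eq (congrArg _ (EuclideanSpace.norm_toLp_sq x.ofLp).symm))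

theorem Matrix.l2_opNorm_sq_le_of_mulVec_dotProduct_mulVec_le [DecidableEq n]
    (A : Matrix m n ℝ) {β : ℝ} (hβ : 0 ≤ β) (h : ∀ x, A *ᵥ x ⬝ᵥ A *ᵥ x ≤ β * (x ⬝ᵥ x)) :
    ‖A‖ ^ 2 ≤ β := by
  have := A.l2_opNorm_le_of_mulVec_dotProduct_mulVec_le (Real.sqrt_nonneg β)
    (by simpa only [Real.sq_sqrt hβ] using h)
  simpa only [Real.sq_sqrt hβ] using pow_le_pow_left₀ (norm_nonneg A) this 2

theorem Matrix.l2_opNorm_transpose [DecidableEq m] [DecidableEq n] (A : Matrix m n ℝ) :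
    ‖Aᵀ‖ = ‖A‖ := by
  rw [← conjTranspose_eq_transpose_of_trivial, l2_opNorm_conjTranspose]

theorem Matrix.l2_opNorm_transpose_mul_self [DecidableEq n] (A : Matrix m n ℝ) :
    ‖Aᵀ * A‖ = ‖A‖ ^ 2 := by
  rw [← conjTranspose_eq_transpose_of_trivial, l2_opNorm_conjTranspose_mul_self, sq]

theorem Matrix.l2_opNorm_mul_transpose_self_s14 [DecidableEq m] [DecidableEq n] (A : Matrix m n ℝ) :
    ‖A * Aᵀ‖ = ‖A‖ ^ 2 := by
  simpa only [transpose_transpose, l2_opNorm_transpose] using l2_opNorm_transpose_mul_self Aᵀ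

theorem Matrix.l2_opNorm_le_one_of_transpose_mul_self_eq_one [DecidableEq n] {U : Matrix m n ℝ}
    (hU : Uᵀ * U = 1) : ‖U‖ ≤ 1 :=
  U.l2_opNorm_le_of_mulVec_dotProduct_mulVec_le zero_le_one fun x => by
    rw [dotProduct_mulVec_eq_transpose, mulVec_mulVec, hU, one_mulVec, one_pow, one_mul]

theorem Matrix.l2_opNorm_mul_le_of_le [DecidableEq m] [DecidableEq n] {A : Matrix l m ℝ}
    {B : Matrix m n ℝ} {a b : ℝ} (hA : ‖A‖ ≤ a) (hB : ‖B‖ ≤ b) : ‖A * B‖ ≤ a * b :=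
  (l2_opNorm_mul A B).trans (mul_le_mul hA hB (norm_nonneg B) ((norm_nonneg A).trans hA))

theorem Matrix.l2_opNorm_le_of_isDiag [DecidableEq n] {A : Matrix n n ℝ} (hA : A.IsDiag)
    {c : ℝ} (hc : 0 ≤ c) (h : ∀ i, |A i i| ≤ c) : ‖A‖ ≤ c := by
  rw [← hA.diagonal_diag, l2_opNorm_diagonal]
  exact (pi_norm_le_iff_of_nonneg hc).mpr h

theorem Matrix.l2_opNorm_add_mul_transpose_le [DecidableEq m] [DecidableEq n]
    (A B : Matrix m n ℝ) : ‖(A + B) * (A + B)ᵀ‖ ≤ ‖A * Aᵀ‖ + ‖B * Bᵀ‖ + 2 * ‖A * Bᵀ‖ := by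
  have hexpand : (A + B) * (A + B)ᵀ = A * Aᵀ + B * Bᵀ + (A * Bᵀ + (A * Bᵀ)ᵀ) := by
    simp only [transpose_add, transpose_mul, transpose_transpose, Matrix.mul_add,
      Matrix.add_mul]
    abel
  rw [hexpand]
  have h₃ : ‖A * Aᵀ + B * Bᵀ + (A * Bᵀ + (A * Bᵀ)ᵀ)‖ ≤
      ‖A * Aᵀ‖ + ‖B * Bᵀ‖ + ‖A * Bᵀ + (A * Bᵀ)ᵀ‖ := norm_add₃_le
  have h₂ := norm_add_le (A * Bᵀ) (A * Bᵀ)ᵀ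
  rw [l2_opNorm_transpose] at h₂
  linarith

theorem Matrix.l2_opNorm_sub_mul_transpose_le [DecidableEq m] [DecidableEq n]
    (A B : Matrix m n ℝ) : ‖(A - B) * (A - B)ᵀ‖ ≤ ‖A * Aᵀ‖ + ‖B * Bᵀ‖ + 2 * ‖A * Bᵀ‖ := by
  simpa only [sub_eq_add_neg, transpose_neg, Matrix.mul_neg, Matrix.neg_mul, neg_neg,
    norm_neg] using l2_opNorm_add_mul_transpose_le A (-B)

end L2OpNorm

-- `z ≥ m² / s`, and `m ↦ m - c m² / s` is increasing up to `s / (2c) ≥ D s`.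
theorem sub_mul_le_mul_of_sq_le_mul {c D m s z : ℝ} (hc : 0 ≤ c) (hcD : 2 * c * D ≤ 1)
    (hs : 0 ≤ s) (hz : 0 ≤ z) (hm : m ≤ D * s) (hmz : m ^ 2 ≤ s * z) :
    m - c * z ≤ (D - c * D ^ 2) * s := by
  rcases hs.eq_or_lt with rfl | hs
  · nlinarith
  · have hfactor : 0 ≤ (D * s - m) * (s - c * (D * s + m)) :=
      mul_nonneg (by linarith) (by nlinarith)
    refine le_of_mul_le_mul_left ?_ hs
    nlinarith

section GradientStep

variable {ι k m : Type*} [Fintype ι] [Fintype k] [Fintype m] [DecidableEq ι] [DecidableEq k]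

theorem Matrix.one_sub_smul_transpose_mul_self_mulVec_dotProduct_le {η t : ℝ} (hη : 0 ≤ η)
    {F : Matrix ι k ℝ} (hF : η * ‖F‖ ^ 2 ≤ t) (y : k → ℝ) :
    (1 - η • (Fᵀ * F)) *ᵥ y ⬝ᵥ (1 - η • (Fᵀ * F)) *ᵥ y ≤
      y ⬝ᵥ y - (2 - t) * η * (F *ᵥ y ⬝ᵥ F *ᵥ y) := by
  set u := F *ᵥ y
  have hWy : (1 - η • (Fᵀ * F)) *ᵥ y = y - η • (Fᵀ *ᵥ u) := by
    rw [sub_mulVec, one_mulVec, smul_mulVec, mulVec_mulVec]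
  have hyu : y ⬝ᵥ Fᵀ *ᵥ u = u ⬝ᵥ u := by
    rw [dotProduct_mulVec_eq_transpose, transpose_transpose]
  have hu := Fᵀ.mulVec_dotProduct_mulVec_le u
  rw [l2_opNorm_transpose] at hu
  rw [hWy]
  simp only [sub_dotProduct, dotProduct_sub, smul_dotProduct, dotProduct_smul, smul_eq_mul,
    dotProduct_comm (Fᵀ *ᵥ u) y, hyu]
  nlinarith [mul_le_mul_of_nonneg_left hu (mul_nonneg hη hη),
    mul_le_mul_of_nonneg_right hF (mul_nonneg hη (dotProduct_self_nonneg u))]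

theorem Matrix.l2_opNorm_one_sub_smul_transpose_mul_self_le_one {η : ℝ} (hη : 0 ≤ η)
    {F : Matrix ι k ℝ} (hF : η * ‖F‖ ^ 2 ≤ 2) : ‖1 - η • (Fᵀ * F)‖ ≤ 1 := by
  refine (sq_le_one_iff₀ (norm_nonneg _)).mp <|
    l2_opNorm_sq_le_of_mulVec_dotProduct_mulVec_le _ zero_le_one fun y => ?_
  have := one_sub_smul_transpose_mul_self_mulVec_dotProduct_le hη hF y
  linarith

theorem Matrix.l2_opNorm_mul_mul_transpose_le_of_contraction [DecidableEq m] {T : Matrix m k ℝ}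
    {W : Matrix k k ℝ} {c D : ℝ} (hc : 0 ≤ c) (hcD : 2 * c * D ≤ 1) (hT : ‖T * Tᵀ‖ ≤ D)
    (hW : ∀ y, Wᵀ *ᵥ y ⬝ᵥ Wᵀ *ᵥ y ≤ y ⬝ᵥ y - c * (T *ᵥ y ⬝ᵥ T *ᵥ y)) :
    ‖T * W * (T * W)ᵀ‖ ≤ D - c * D ^ 2 := by
  have hD : 0 ≤ D := (norm_nonneg _).trans hT
  rw [l2_opNorm_mul_transpose_self_s14, ← l2_opNorm_transpose]
  refine l2_opNorm_sq_le_of_mulVec_dotProduct_mulVec_le _ (by nlinarith) fun x => ?_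
  set y := Tᵀ *ᵥ x
  have hy : y ⬝ᵥ y = x ⬝ᵥ T *ᵥ y := by
    rw [dotProduct_mulVec_eq_transpose, transpose_transpose, dotProduct_comm]
  have hyD : y ⬝ᵥ y ≤ D * (x ⬝ᵥ x) := by
    have := Tᵀ.mulVec_dotProduct_mulVec_le x
    rw [l2_opNorm_transpose, ← l2_opNorm_mul_transpose_self_s14] at this
    exact this.trans (mul_le_mul_of_nonneg_right hT (dotProduct_self_nonneg x))
  have hcs : (y ⬝ᵥ y) ^ 2 ≤ (x ⬝ᵥ x) * (T *ᵥ y ⬝ᵥ T *ᵥ y) :=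
    hy ▸ sq_dotProduct_le x (T *ᵥ y)
  rw [transpose_mul, ← mulVec_mulVec]
  exact (hW y).trans (sub_mul_le_mul_of_sq_le_mul hc hcD (dotProduct_self_nonneg x)
    (dotProduct_self_nonneg _) hyD hcs)

theorem Matrix.l2_opNorm_mul_one_sub_smul_mul_transpose_self_le [DecidableEq m] {V : Matrix ι m ℝ}
    {F : Matrix ι k ℝ} {T : Matrix m k ℝ} {η t D : ℝ} (hη : 0 ≤ η) (hV : ‖V‖ ≤ 1)
    (hT : T = Vᵀ * F) (hTT : ‖T * Tᵀ‖ ≤ D) (hF : η * ‖F‖ ^ 2 ≤ t) (ht : t ≤ 2)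
    (hηD : 2 * ((2 - t) * η) * D ≤ 1) :
    ‖T * (1 - η • (Fᵀ * F)) * (T * (1 - η • (Fᵀ * F)))ᵀ‖ ≤ D - (2 - t) * η * D ^ 2 := by
  refine l2_opNorm_mul_mul_transpose_le_of_contraction (by nlinarith) hηD hTT fun y => ?_
  have hTy : T *ᵥ y ⬝ᵥ T *ᵥ y ≤ F *ᵥ y ⬝ᵥ F *ᵥ y := by
    have hVt : ‖Vᵀ‖ ^ 2 ≤ 1 := pow_le_one₀ (norm_nonneg _) ((l2_opNorm_transpose V).trans_le hV)
    have := Vᵀ.mulVec_dotProduct_mulVec_le (F *ᵥ y)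
    rw [hT, ← mulVec_mulVec]
    nlinarith [dotProduct_self_nonneg (F *ᵥ y)]
  have hWt : (1 - η • (Fᵀ * F))ᵀ = 1 - η • (Fᵀ * F) := by
    simp [transpose_sub, transpose_smul, transpose_mul]
  rw [hWt]
  have := one_sub_smul_transpose_mul_self_mulVec_dotProduct_le hη hF y
  nlinarith [mul_le_mul_of_nonneg_left hTy (mul_nonneg (sub_nonneg.2 ht) hη)]

theorem Matrix.l2_opNorm_mul_one_sub_smul_mul_transpose_le {F : Matrix ι k ℝ} {η : ℝ}
    (hη : 0 ≤ η) (hF : η * ‖F‖ ^ 2 ≤ 2) (T : Matrix m k ℝ) :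
    ‖T * (1 - η • (Fᵀ * F)) * Fᵀ‖ ≤ ‖T * Fᵀ‖ := by
  have hcomm : (1 - η • (Fᵀ * F)) * Fᵀ = Fᵀ * (1 - η • (Fᵀᵀ * Fᵀ)) := by
    simp only [transpose_transpose, Matrix.sub_mul, Matrix.mul_sub, Matrix.one_mul,
      Matrix.mul_one, Matrix.smul_mul, Matrix.mul_smul, Matrix.mul_assoc]
  have hW : ‖1 - η • (Fᵀᵀ * Fᵀ)‖ ≤ 1 :=
    l2_opNorm_one_sub_smul_transpose_mul_self_le_one hη (by rwa [l2_opNorm_transpose])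
  rw [Matrix.mul_assoc, hcomm, ← Matrix.mul_assoc]
  simpa using l2_opNorm_mul_le_of_le le_rfl hW

end GradientStep

section SpectralSplit

variable {ι p m k : Type*} [Fintype ι] [Fintype p] [Fintype m]

theorem Matrix.transpose_mul_gradient_step [Fintype k] [DecidableEq m] [DecidableEq k]
    {U : Matrix ι p ℝ} {V : Matrix ι m ℝ} (hVU : Vᵀ * U = 0) (hV : Vᵀ * V = 1)
    (DS : Matrix p p ℝ) (DT : Matrix m m ℝ) (F : Matrix ι k ℝ) (Δ : Matrix ι ι ℝ) (η : ℝ) :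
    Vᵀ * (F - η • ((F * Fᵀ - (U * DS * Uᵀ + V * DT * Vᵀ)) * F + Δ * F)) =
      Vᵀ * F * (1 - η • (Fᵀ * F)) + η • (DT * (Vᵀ * F) - Vᵀ * Δ * F) := by
  have hVX : Vᵀ * (U * DS * Uᵀ + V * DT * Vᵀ) = DT * Vᵀ := by
    simp only [Matrix.mul_add, ← Matrix.mul_assoc, hVU, hV, Matrix.zero_mul, zero_add,
      Matrix.one_mul]
  rw [Matrix.mul_sub, Matrix.mul_smul, Matrix.mul_add, ← Matrix.mul_assoc Vᵀ _ F,
    Matrix.mul_sub, hVX]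
  simp only [Matrix.mul_sub, Matrix.sub_mul, Matrix.mul_one, Matrix.mul_smul, Matrix.mul_assoc,
    smul_sub, smul_add]
  abel

theorem Matrix.transpose_mul_self_eq_add {U : Matrix ι p ℝ} {V : Matrix ι m ℝ}
    [DecidableEq ι] (hUV : U * Uᵀ + V * Vᵀ = 1) (F : Matrix ι k ℝ) :
    Fᵀ * F = (Uᵀ * F)ᵀ * (Uᵀ * F) + (Vᵀ * F)ᵀ * (Vᵀ * F) := by
  conv_lhs => rw [← Matrix.mul_one Fᵀ, ← hUV]
  simp only [Matrix.mul_add, Matrix.add_mul, transpose_mul, transpose_transpose,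
    Matrix.mul_assoc]

theorem Matrix.l2_opNorm_sq_le_add [Fintype k] {U : Matrix ι p ℝ} {V : Matrix ι m ℝ}
    [DecidableEq ι] [DecidableEq p] [DecidableEq m] [DecidableEq k]
    (hUV : U * Uᵀ + V * Vᵀ = 1) (F : Matrix ι k ℝ) :
    ‖F‖ ^ 2 ≤ ‖Uᵀ * F * (Uᵀ * F)ᵀ‖ + ‖Vᵀ * F * (Vᵀ * F)ᵀ‖ := by
  rw [← l2_opNorm_transpose_mul_self, transpose_mul_self_eq_add hUV, l2_opNorm_mul_transpose_self_s14,
    l2_opNorm_mul_transpose_self_s14, ← l2_opNorm_transpose_mul_self, ← l2_opNorm_transpose_mul_self]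
  exact norm_add_le _ _

theorem Matrix.l2_opNorm_mul_transpose_le_add [Fintype k] {U : Matrix ι p ℝ}
    {V : Matrix ι m ℝ} {n : Type*} [Fintype n] [DecidableEq ι] [DecidableEq p] [DecidableEq m]
    (hUV : U * Uᵀ + V * Vᵀ = 1) (hU : ‖U‖ ≤ 1) (hV : ‖V‖ ≤ 1) (M : Matrix n k ℝ)
    (F : Matrix ι k ℝ) : ‖M * Fᵀ‖ ≤ ‖M * (Uᵀ * F)ᵀ‖ + ‖M * (Vᵀ * F)ᵀ‖ := by
  have hsplit : M * Fᵀ = M * (Uᵀ * F)ᵀ * Uᵀ + M * (Vᵀ * F)ᵀ * Vᵀ := by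
    simp only [transpose_mul, transpose_transpose, Matrix.mul_assoc, ← Matrix.mul_add, hUV,
      Matrix.mul_one]
  rw [hsplit]
  refine (norm_add_le _ _).trans (add_le_add ?_ ?_)
  · simpa using l2_opNorm_mul_le_of_le le_rfl ((l2_opNorm_transpose U).trans_le hU)
  · simpa using l2_opNorm_mul_le_of_le le_rfl ((l2_opNorm_transpose V).trans_le hV)

end SpectralSplit

section OneStep

variable {ι m k : Type*} [Fintype ι] [Fintype m] [Fintype k] [DecidableEq ι] [DecidableEq m]
  [DecidableEq k] {V : Matrix ι m ℝ} {F : Matrix ι k ℝ} {T : Matrix m k ℝ} {DT : Matrix m m ℝ}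

theorem Matrix.l2_opNorm_gradient_step_mul_perturbation_transpose_le (Δ : Matrix ι ι ℝ) {η D ε : ℝ}
    (hη : 0 ≤ η) (hF : η * ‖F‖ ^ 2 ≤ 2) (hV : ‖V‖ ≤ 1) (hTT : ‖T * Tᵀ‖ ≤ D)
    (hTF : ‖T * Fᵀ‖ ≤ 2 * D) (hDT : ‖DT‖ ≤ ε) :
    ‖T * (1 - η • (Fᵀ * F)) * (DT * T - Vᵀ * Δ * F)ᵀ‖ ≤ ε * D + 2 * D * ‖Δ‖ := by
  set W := 1 - η • (Fᵀ * F)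
  rw [transpose_sub, Matrix.mul_sub]
  refine (norm_sub_le _ _).trans (add_le_add ?_ ?_)
  · have hW : ‖W‖ ≤ 1 := l2_opNorm_one_sub_smul_transpose_mul_self_le_one hη hF
    have hT2 : ‖T‖ ^ 2 ≤ D := by rwa [← l2_opNorm_mul_transpose_self_s14]
    rw [transpose_mul, ← Matrix.mul_assoc]
    calc ‖T * W * Tᵀ * DTᵀ‖ ≤ ‖T‖ * 1 * ‖T‖ * ε := l2_opNorm_mul_le_of_le
          (l2_opNorm_mul_le_of_le (l2_opNorm_mul_le_of_le le_rfl hW) (l2_opNorm_transpose T).le)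
          ((l2_opNorm_transpose DT).trans_le hDT)
      _ = ε * ‖T‖ ^ 2 := by ring
      _ ≤ ε * D := by gcongr; exact (norm_nonneg DT).trans hDT
  · rw [show T * W * (Vᵀ * Δ * F)ᵀ = T * W * Fᵀ * Δᵀ * V by
      simp only [transpose_mul, transpose_transpose, Matrix.mul_assoc]]
    simpa using l2_opNorm_mul_le_of_le (l2_opNorm_mul_le_of_le
      ((l2_opNorm_mul_one_sub_smul_mul_transpose_le hη hF T).trans hTF)
      (l2_opNorm_transpose Δ).le) hV

theorem Matrix.l2_opNorm_perturbation_mul_transpose_le (Δ : Matrix ι ι ℝ) {D ε φ : ℝ} (hV : ‖V‖ ≤ 1)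
    (hTT : ‖T * Tᵀ‖ ≤ D) (hTF : ‖T * Fᵀ‖ ≤ 2 * D) (hF : ‖F‖ ^ 2 ≤ φ) (hDT : ‖DT‖ ≤ ε) :
    ‖(DT * T - Vᵀ * Δ * F) * (DT * T - Vᵀ * Δ * F)ᵀ‖ ≤
      ε ^ 2 * D + φ * ‖Δ‖ ^ 2 + 2 * (ε * (2 * D) * ‖Δ‖) := by
  have hVt : ‖Vᵀ‖ ≤ 1 := (l2_opNorm_transpose V).trans_le hV
  refine (l2_opNorm_sub_mul_transpose_le _ _).trans (add_le_add (add_le_add ?_ ?_) ?_)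
  · have hT2 : ‖T‖ ^ 2 ≤ D := by rwa [← l2_opNorm_mul_transpose_self_s14]
    rw [l2_opNorm_mul_transpose_self_s14]
    calc ‖DT * T‖ ^ 2 ≤ (ε * ‖T‖) ^ 2 := by gcongr; exact l2_opNorm_mul_le_of_le hDT le_rfl
      _ = ε ^ 2 * ‖T‖ ^ 2 := by ring
      _ ≤ ε ^ 2 * D := by gcongr
  · rw [l2_opNorm_mul_transpose_self_s14]
    calc ‖Vᵀ * Δ * F‖ ^ 2 ≤ (1 * ‖Δ‖ * ‖F‖) ^ 2 := by
          gcongr; exact l2_opNorm_mul_le_of_le (l2_opNorm_mul_le_of_le hVt le_rfl) le_rfl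
      _ = ‖F‖ ^ 2 * ‖Δ‖ ^ 2 := by ring
      _ ≤ φ * ‖Δ‖ ^ 2 := by gcongr
  · rw [show DT * T * (Vᵀ * Δ * F)ᵀ = DT * (T * Fᵀ) * Δᵀ * V by
      simp only [transpose_mul, transpose_transpose, Matrix.mul_assoc]]
    gcongr
    simpa using l2_opNorm_mul_le_of_le (l2_opNorm_mul_le_of_le (l2_opNorm_mul_le_of_le hDT hTF)
      (l2_opNorm_transpose Δ).le) hV

theorem Matrix.l2_opNorm_gradient_step_mul_transpose_le (Δ : Matrix ι ι ℝ) {η D ε φ : ℝ}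
    (hη : 0 ≤ η) (hV : ‖V‖ ≤ 1) (hT : T = Vᵀ * F) (hTT : ‖T * Tᵀ‖ ≤ D)
    (hTF : ‖T * Fᵀ‖ ≤ 2 * D) (hF : ‖F‖ ^ 2 ≤ φ) (hDT : ‖DT‖ ≤ ε) (hηφ : η * φ ≤ 0.1)
    (hηD : 3.8 * η * D ≤ 1) :
    ‖(T * (1 - η • (Fᵀ * F)) + η • (DT * T - Vᵀ * Δ * F)) *
        (T * (1 - η • (Fᵀ * F)) + η • (DT * T - Vᵀ * Δ * F))ᵀ‖ ≤
      D - 1.9 * η * D ^ 2 + η ^ 2 * (ε ^ 2 * D + φ * ‖Δ‖ ^ 2 + 2 * (ε * (2 * D) * ‖Δ‖)) +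
        2 * (η * (ε * D + 2 * D * ‖Δ‖)) := by
  have hηF : η * ‖F‖ ^ 2 ≤ 0.1 := (mul_le_mul_of_nonneg_left hF hη).trans hηφ
  refine (l2_opNorm_add_mul_transpose_le _ _).trans (add_le_add (add_le_add ?_ ?_) ?_)
  · have := l2_opNorm_mul_one_sub_smul_mul_transpose_self_le hη hV hT hTT hηF (by norm_num)
      (by linarith)
    rwa [show (2 : ℝ) - 0.1 = 1.9 by norm_num] at this
  · rw [transpose_smul, Matrix.smul_mul, Matrix.mul_smul, smul_smul,
      norm_smul_of_nonneg (by positivity), ← sq]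
    gcongr
    exact l2_opNorm_perturbation_mul_transpose_le Δ hV hTT hTF hF hDT
  · rw [transpose_smul, Matrix.mul_smul, norm_smul_of_nonneg hη]
    gcongr
    exact l2_opNorm_gradient_step_mul_perturbation_transpose_le Δ hη (by linarith) hV hTT hTF hDT

end OneStep

-- Multiplied by `η`, this is a polynomial inequality in `a = ηD`, `e = ηε`, `g = ηδ`.
theorem gradient_step_bound {η σr σ₁ D ε δ : ℝ} (hη : 0 < η) (hησ₁ : η * σ₁ = 1 / 100)
    (hησr : η * σr ≤ 1 / 100) (hD : 0 ≤ D) (hηD : η * D ≤ 0.001) (hε : 0 ≤ ε)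
    (hεσr : ε ≤ 0.0015 * σr) (hδ : 0 ≤ δ) (hδD : δ ≤ η * σr * D + 4 * ε) :
    D - 1.9 * η * D ^ 2 + η ^ 2 * (ε ^ 2 * D + (σ₁ + 2 * D) * δ ^ 2 + 2 * (ε * (2 * D) * δ)) +
        2 * (η * (ε * D + 2 * D * δ)) ≤
      (1 - 0.9 * η * D) * D + (0.16 * ε + 19 * D) * η * ε := by
  set a := η * D
  set e := η * ε
  set g := η * δ
  have ha : 0 ≤ a := mul_nonneg hη.le hD
  have he : 0 ≤ e := mul_nonneg hη.le hε
  have he' : e ≤ 0.000015 := by linarith [mul_le_mul_of_nonneg_left hεσr hη.le]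
  have hg : g ≤ a / 100 + 4 * e := by
    nlinarith [mul_le_mul_of_nonneg_left hδD hη.le, mul_le_mul_of_nonneg_right hησr ha]
  have hg2 : g ^ 2 ≤ (a / 100 + 4 * e) ^ 2 := pow_le_pow_left₀ (mul_nonneg hη.le hδ) hg 2
  have key : a * e ^ 2 + (1 / 100 + 2 * a) * g ^ 2 + 4 * a * e * g + 2 * a * e + 4 * a * g ≤
      a ^ 2 + 0.16 * e ^ 2 + 19 * a * e := by
    nlinarith [mul_le_mul_of_nonneg_left hg (mul_nonneg ha he),
      mul_le_mul_of_nonneg_left hg ha, mul_le_mul_of_nonneg_left hg2 ha,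
      mul_nonneg (sub_nonneg.2 hηD) (mul_nonneg ha ha),
      mul_nonneg (sub_nonneg.2 he') (mul_nonneg ha he),
      mul_nonneg (sub_nonneg.2 hηD) (mul_nonneg ha he), mul_nonneg ha (mul_nonneg he he)]
  refine le_of_mul_le_mul_left ?_ hη
  linear_combination key + (η ^ 2 * δ ^ 2) * hησ₁

theorem sqrt_mul_le_of_sample_size_le {d k n : ℕ} {σ σr κ : ℝ} (hd : 2 ≤ d) (hk : 1 ≤ k)
    (hσr : 0 < σr) (hκ : 1 ≤ κ)
    (hn : (10 : ℝ) ^ 6 * k * κ ^ 2 * d * Real.log d ^ 3 * max 1 (σ ^ 2 / σr ^ 2) ≤ n) :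
    Real.sqrt (d * Real.log d / n) * σ ≤ 0.0015 * σr := by
  set L := Real.log d
  set M := max 1 (σ ^ 2 / σr ^ 2)
  have hL : 0.6931 ≤ L := by
    have := Real.log_le_log (by norm_num) (show (2 : ℝ) ≤ d by exact_mod_cast hd)
    linarith [Real.log_two_gt_d9]
  have hσ : σ ^ 2 ≤ M * σr ^ 2 := (div_le_iff₀ (by positivity)).mp (le_max_right _ _)
  have hkκ : 1 ≤ (k : ℝ) * κ ^ 2 :=
    one_le_mul_of_one_le_of_one_le (by exact_mod_cast hk) (one_le_pow₀ hκ)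
  have hsq : (Real.sqrt (d * L / n) * σ) ^ 2 ≤ (0.0015 * σr) ^ 2 := by
    rw [mul_pow, Real.sq_sqrt (by positivity), div_mul_eq_mul_div]
    refine div_le_of_le_mul₀ (Nat.cast_nonneg n) (by positivity) ?_
    calc d * L * σ ^ 2 ≤ d * L * (M * σr ^ 2) := by gcongr
      _ ≤ d * L * (M * σr ^ 2) * (2.25 * (k * κ ^ 2) * L ^ 2) :=
          le_mul_of_one_le_right (by positivity) (by nlinarith)
      _ = (0.0015 * σr) ^ 2 * (10 ^ 6 * k * κ ^ 2 * d * L ^ 3 * M) := by ring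
      _ ≤ (0.0015 * σr) ^ 2 * n := by gcongr
  exact le_of_sq_le_sq hsq (by positivity)

theorem stmt_14_general
    (d k r : ℕ) (hd : 2 ≤ d) (hr : 0 < r) (hrk : r ≤ k)
    (U : Matrix (Fin d) (Fin r) ℝ) (V : Matrix (Fin d) (Fin (d - r)) ℝ)
    (hU : Uᵀ * U = 1) (hV : Vᵀ * V = 1) (hUV : Uᵀ * V = 0)
    (hUVc : U * Uᵀ + V * Vᵀ = 1)
    (σr σ1 : ℝ) (hσr : 0 < σr)
    (DS : Matrix (Fin r) (Fin r) ℝ) (hDS : DS.IsDiag)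
    (hDSlb : ∀ i, σr ≤ DS i i) (hDSub : ∀ i, DS i i ≤ σ1)
    (DT : Matrix (Fin (d - r)) (Fin (d - r)) ℝ)
    (κ : ℝ) (hκ : κ = σ1 / σr)
    (η : ℝ) (hη : η = 1 / (100 * σ1))
    (X : Matrix (Fin d) (Fin d) ℝ) (hX : X = U * DS * Uᵀ + V * DT * Vᵀ)
    (F : Matrix (Fin d) (Fin k) ℝ)
    (S : Matrix (Fin r) (Fin k) ℝ) (hS : S = Uᵀ * F)
    (T : Matrix (Fin (d - r)) (Fin k) ℝ) (hT : T = Vᵀ * F)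
    (G : Matrix (Fin d) (Fin k) ℝ) (hG : G = (F * Fᵀ - X) * F)
    (σ : ℝ)
    (n : ℕ)
    (hnbig : (10 : ℝ) ^ 6 * k * κ ^ 2 * d * (Real.log d) ^ 3 * max 1 (σ ^ 2 / σr ^ 2) ≤ n)
    (Δ : Matrix (Fin d) (Fin d) ℝ)
    (Fp : Matrix (Fin d) (Fin k) ℝ) (hFp : Fp = F - η • (G + Δ * F))
    (Tp : Matrix (Fin (d - r)) (Fin k) ℝ) (hTp : Tp = Vᵀ * Fp)
    (D : ℝ) (hD : D = max (max ‖S * Sᵀ - DS‖ ‖T * Tᵀ‖) ‖S * Tᵀ‖)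
    (hDTsmall : ‖DT‖ ≤ Real.sqrt (d * Real.log d / n) * σ)
    (hinit : D ≤ 0.1 * σr)
    (ε : ℝ) (hε : ε = Real.sqrt (d * Real.log d / n) * σ)
    (hΔ : ‖Δ‖ ≤ η * σr * D + 4 * ε) :
    ‖Tp * Tpᵀ‖ ≤ (1 - 0.9 * η * D) * D + (0.16 * ε + 19 * D) * η * ε := by
  subst hS hT
  have hσ1 : σr ≤ σ1 := (hDSlb ⟨0, hr⟩).trans (hDSub ⟨0, hr⟩)
  have hσ1pos : 0 < σ1 := hσr.trans_le hσ1
  have hη0 : 0 < η := by rw [hη]; positivity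
  have hησ1 : η * σ1 = 1 / 100 := by rw [hη]; field_simp
  have hησr : η * σr ≤ 1 / 100 := hησ1 ▸ mul_le_mul_of_nonneg_left hσ1 hη0.le
  obtain ⟨⟨hSS, hTT⟩, hST⟩ := (max_le_iff.mp hD.ge).imp_left max_le_iff.mp
  have hD0 : 0 ≤ D := (norm_nonneg _).trans hTT
  have hηD : η * D ≤ 0.001 := by linarith [mul_le_mul_of_nonneg_left hinit hη0.le]
  rw [← hε] at hDTsmall
  have hεσr : ε ≤ 0.0015 * σr := hε ▸ sqrt_mul_le_of_sample_size_le hd (hr.trans_le hrk) hσr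
    (by rw [hκ, le_div_iff₀ hσr]; linarith) hnbig
  have hDSσ1 : ‖DS‖ ≤ σ1 := l2_opNorm_le_of_isDiag hDS (by linarith)
    fun i => abs_le.2 ⟨by linarith [hDSlb i], hDSub i⟩
  have hVn := l2_opNorm_le_one_of_transpose_mul_self_eq_one hV
  have hF : ‖F‖ ^ 2 ≤ σ1 + 2 * D := by
    linarith [l2_opNorm_sq_le_add hUVc F, norm_sub_norm_le (Uᵀ * F * (Uᵀ * F)ᵀ) DS]
  have hTS : ‖Vᵀ * F * (Uᵀ * F)ᵀ‖ ≤ D := by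
    rwa [← l2_opNorm_transpose, transpose_mul, transpose_transpose]
  have hTF : ‖Vᵀ * F * Fᵀ‖ ≤ 2 * D := by
    linarith [l2_opNorm_mul_transpose_le_add hUVc
      (l2_opNorm_le_one_of_transpose_mul_self_eq_one hU) hVn (Vᵀ * F) F]
  have hVU : Vᵀ * U = 0 := by rw [← transpose_transpose U, ← transpose_mul, hUV, transpose_zero]
  rw [hTp, hFp, hG, hX, transpose_mul_gradient_step hVU hV]
  refine (l2_opNorm_gradient_step_mul_transpose_le Δ hη0.le hVn rfl hTT hTF hF hDTsmall
    (by linarith) (by linarith)).trans ?_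
  exact gradient_step_bound hη0 hησ1 hησr hD0 hηD ((norm_nonneg DT).trans hDTsmall) hεσr
    (norm_nonneg Δ) hΔ

theorem stmt_14
    (d k r : ℕ) (hd : 2 ≤ d) (hr : 0 < r) (hrk : r ≤ k) (hkd : k ≤ d)
    (U : Matrix (Fin d) (Fin r) ℝ) (V : Matrix (Fin d) (Fin (d - r)) ℝ)
    (hU : Uᵀ * U = 1) (hV : Vᵀ * V = 1) (hUV : Uᵀ * V = 0)
    (hUVc : U * Uᵀ + V * Vᵀ = 1)
    (σr σ1 : ℝ) (hσr : 0 < σr)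
    (DS : Matrix (Fin r) (Fin r) ℝ) (hDS : DS.IsDiag)
    (hDSlb : ∀ i, σr ≤ DS i i) (hDSub : ∀ i, DS i i ≤ σ1)
    (DT : Matrix (Fin (d - r)) (Fin (d - r)) ℝ) (hDT : DT.IsDiag)
    (hDTnn : ∀ i, 0 ≤ DT i i)
    (κ : ℝ) (hκ : κ = σ1 / σr)
    (η : ℝ) (hη : η = 1 / (100 * σ1))
    (X : Matrix (Fin d) (Fin d) ℝ) (hX : X = U * DS * Uᵀ + V * DT * Vᵀ)
    (F : Matrix (Fin d) (Fin k) ℝ)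
    (S : Matrix (Fin r) (Fin k) ℝ) (hS : S = Uᵀ * F)
    (T : Matrix (Fin (d - r)) (Fin k) ℝ) (hT : T = Vᵀ * F)
    (G : Matrix (Fin d) (Fin k) ℝ) (hG : G = (F * Fᵀ - X) * F)
    (σ : ℝ) (hσ : 0 ≤ σ)
    (n : ℕ) (hn : 0 < n)
    (hnbig : (10 : ℝ) ^ 6 * k * κ ^ 2 * d * (Real.log d) ^ 3 * max 1 (σ ^ 2 / σr ^ 2) ≤ n)
    (Δ : Matrix (Fin d) (Fin d) ℝ) (hΔsymm : Δ.IsSymm)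
    (Fp : Matrix (Fin d) (Fin k) ℝ) (hFp : Fp = F - η • (G + Δ * F))
    (Sp : Matrix (Fin r) (Fin k) ℝ) (hSp : Sp = Uᵀ * Fp)
    (Tp : Matrix (Fin (d - r)) (Fin k) ℝ) (hTp : Tp = Vᵀ * Fp)
    (D : ℝ) (hD : D = max (max ‖S * Sᵀ - DS‖ ‖T * Tᵀ‖) ‖S * Tᵀ‖)
    (hDTsmall : ‖DT‖ ≤ Real.sqrt (d * Real.log d / n) * σ)
    (hinit : D ≤ 0.1 * σr)
    (ε : ℝ) (hε : ε = Real.sqrt (d * Real.log d / n) * σ)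
    (hΔ : ‖Δ‖ ≤ η * σr * D + 4 * ε) :
    ‖Tp * Tpᵀ‖ ≤ (1 - 0.9 * η * D) * D + (0.16 * ε + 19 * D) * η * ε :=
  stmt_14_general d k r hd hr hrk U V hU hV hUV hUVc σr σ1 hσr DS hDS hDSlb hDSub DT κ hκ η hη X hX
    F S hS T hT G hG σ n hnbig Δ Fp hFp Tp hTp D hD hDTsmall hinit ε hε hΔ
end
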